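/- Every monomial factor algebra S/I with depth S/I ≤ 1 satisfies Stanley's conjecture, i.e., sdepth S/I ≥ depth S/I. -/

import Mathlib

open MvPolynomial

/-- The monomial `x^c = x_1^{c 1} ⋯ x_n^{c n}` in `K[x_1,…,x_n]`. -/
noncomputable def monX (n : ℕ) (K : Type*) [Field K] (c : Fin n → ℕ) :
    MvPolynomial (Fin n) K := ∏ i, X i ^ c i

/-- `ρ(b) = |{k : b k = g k}|`. -/
def rho {n : ℕ} (g b : Fin n → ℕ) : ℕ := (Finset.univ.filter fun k => b k = g k).card

/-- The `j`-th skeleton ideal of `I` with respect to `g`: the ideal generated by `I`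
together with all monomials `x^b` with `ρ(b) > j`. -/
noncomputable def skel {n : ℕ} (K : Type*) [Field K]
    (I : Ideal (MvPolynomial (Fin n) K)) (g : Fin n → ℕ) (j : ℕ) :
    Ideal (MvPolynomial (Fin n) K) :=
  I ⊔ Ideal.span {m | ∃ b : Fin n → ℕ, j < rho g b ∧ m = monX n K b}

/-- The characteristic poset `P^g_{S/I} = {b ∈ ℕ^n : b ≤ g, x^b ∉ I}`. -/
def charPoset {n : ℕ} (K : Type*) [Field K]
    (I : Ideal (MvPolynomial (Fin n) K)) (g : Fin n → ℕ) : Set (Fin n → ℕ) :=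
  {b | b ≤ g ∧ monX n K b ∉ I}

/-- The characteristic poset `P^g_{J/I} = {b ∈ ℕ^n : b ≤ g, x^b ∈ J \ I}`. -/
def charPoset2 {n : ℕ} (K : Type*) [Field K]
    (I J : Ideal (MvPolynomial (Fin n) K)) (g : Fin n → ℕ) : Set (Fin n → ℕ) :=
  {b | b ≤ g ∧ monX n K b ∈ J ∧ monX n K b ∉ I}

/-- The graded maximal ideal `m = (x_1,…,x_n)`. -/
noncomputable def mxId (n : ℕ) (K : Type*) [Field K] : Ideal (MvPolynomial (Fin n) K) :=
  Ideal.span (Set.range (X : Fin n → MvPolynomial (Fin n) K))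

/-- The depth of a module over `S = K[x_1,…,x_n]` with respect to the graded
maximal ideal: the supremum of lengths of regular sequences contained in `m`. -/
noncomputable def mdepth (n : ℕ) (K : Type*) [Field K] (M : Type*) [AddCommGroup M]
    [Module (MvPolynomial (Fin n) K) M] : ℕ :=
  sSup {r | ∃ rs : List (MvPolynomial (Fin n) K), rs.length = r ∧
    (∀ x ∈ rs, x ∈ mxId n K) ∧ RingTheory.Sequence.IsRegular M rs}

/-- Krull dimension of a module: `dim S/ann M`. -/
noncomputable def mdim (n : ℕ) (K : Type*) [Field K] (M : Type*) [AddCommGroup M]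
    [Module (MvPolynomial (Fin n) K) M] : WithBot (WithTop ℕ) :=
  ringKrullDim (MvPolynomial (Fin n) K ⧸ Module.annihilator (MvPolynomial (Fin n) K) M)

/-- `M` is a Cohen–Macaulay `S`-module of dimension `j`. -/
noncomputable def IsCMof (n : ℕ) (K : Type*) [Field K] (M : Type*) [AddCommGroup M]
    [Module (MvPolynomial (Fin n) K) M] (j : ℕ) : Prop :=
  mdepth n K M = j ∧ mdim n K M = (j : WithBot (WithTop ℕ))

/-- `M` is a Cohen–Macaulay `S`-module (depth = Krull dimension). -/
noncomputable def IsCM (n : ℕ) (K : Type*) [Field K] (M : Type*) [AddCommGroup M]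
    [Module (MvPolynomial (Fin n) K) M] : Prop :=
  (mdepth n K M : WithBot (WithTop ℕ)) = mdim n K M

/-- A partition of a subset `P` of `ℕ^n` into (nonempty) intervals `[cᵢ, dᵢ]`. -/
structure IntervalPartition {n : ℕ} (P : Set (Fin n → ℕ)) where
  r : ℕ
  c : Fin r → (Fin n → ℕ)
  d : Fin r → (Fin n → ℕ)
  le : ∀ i, c i ≤ d i
  cover : P = ⋃ i, Set.Icc (c i) (d i)
  disj : Pairwise (Function.onFun Disjoint fun i => Set.Icc (c i) (d i))

/-- The (combinatorial) Stanley depth of `S/I`: the maximum over interval partitions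
of the characteristic poset `P^g_{S/I}` of `min_i ρ(dᵢ)` (Herzog–Vladoiu–Zheng). -/
noncomputable def sdepthQ {n : ℕ} (K : Type*) [Field K]
    (I : Ideal (MvPolynomial (Fin n) K)) (g : Fin n → ℕ) : ℕ :=
  sSup {t | ∃ P : IntervalPartition (charPoset K I g), ∀ i, t ≤ rho g (P.d i)}

/-- The set of exponents `{c + e : supp e ⊆ Z}`, i.e. the exponents of the monomials
spanning the Stanley space `x^c K[Z]`. -/
def orth {n : ℕ} (c : Fin n → ℕ) (Z : Finset (Fin n)) : Set (Fin n → ℕ) :=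
  {b | c ≤ b ∧ ∀ k ∉ Z, b k = c k}

/-- A Stanley decomposition of `J/I` (for monomial ideals `I ⊆ J`), encoded by the
induced partition of the monomial `K`-basis of `J/I` into Stanley spaces `x^{cᵢ} K[Zᵢ]`. -/
structure StanleyDec {n : ℕ} (K : Type*) [Field K]
    (I J : Ideal (MvPolynomial (Fin n) K)) where
  r : ℕ
  c : Fin r → (Fin n → ℕ)
  Z : Fin r → Finset (Fin n)
  cover : {b | monX n K b ∈ J ∧ monX n K b ∉ I} = ⋃ i, orth (c i) (Z i)
  disj : Pairwise (Function.onFun Disjoint fun i => orth (c i) (Z i))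

/-- The `h`-regularity of `J/I`: the minimum over Stanley decompositions of `max_i |cᵢ|`. -/
noncomputable def hregQ {n : ℕ} (K : Type*) [Field K]
    (I J : Ideal (MvPolynomial (Fin n) K)) : ℕ :=
  sInf {h | ∃ D : StanleyDec K I J, ∀ i, (∑ k, D.c i k) ≤ h}

/-- `σ(Pt) = max_i max{|c| : c ∈ [cᵢ,dᵢ], c k = cᵢ k for all k with dᵢ k = g k}`. -/
noncomputable def sigmaP {n : ℕ} (g : Fin n → ℕ) {P : Set (Fin n → ℕ)}
    (Pt : IntervalPartition P) : ℕ :=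
  sSup {s | ∃ i : Fin Pt.r, ∃ cc ∈ Set.Icc (Pt.c i) (Pt.d i),
    (∀ k, Pt.d i k = g k → cc k = Pt.c i k) ∧ s = ∑ k, cc k}

/-- The truncation `I_{≥ j}`: the ideal generated by all homogeneous elements of `I`
of degree at least `j`. -/
noncomputable def trunc {n : ℕ} (K : Type*) [Field K]
    (I : Ideal (MvPolynomial (Fin n) K)) (j : ℕ) : Ideal (MvPolynomial (Fin n) K) :=
  Ideal.span {f | f ∈ I ∧ ∃ d, j ≤ d ∧ MvPolynomial.IsHomogeneous f d}

/-- A `d`-linear (graded free) resolution of the ideal `I`: a finite exact complex of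
finite free modules augmented to `I`, in which the entries of the augmentation are
homogeneous of degree `d` and all entries of the differentials are linear forms. -/
structure LinearRes {n : ℕ} (K : Type*) [Field K]
    (I : Ideal (MvPolynomial (Fin n) K)) (d : ℕ) where
  len : ℕ
  b : ℕ → ℕ
  fin : ∀ i, len < i → b i = 0
  ε : (Fin (b 0) →₀ MvPolynomial (Fin n) K) →ₗ[MvPolynomial (Fin n) K]
      MvPolynomial (Fin n) K
  δ : ∀ i : ℕ, (Fin (b (i+1)) →₀ MvPolynomial (Fin n) K) →ₗ[MvPolynomial (Fin n) K]
      (Fin (b i) →₀ MvPolynomial (Fin n) K)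
  hε : ∀ j, MvPolynomial.IsHomogeneous (ε (Finsupp.single j 1)) d
  hδ : ∀ i j k, MvPolynomial.IsHomogeneous ((δ i (Finsupp.single j 1)) k) 1
  surj : LinearMap.range ε = (I : Submodule (MvPolynomial (Fin n) K) (MvPolynomial (Fin n) K))
  exact0 : LinearMap.ker ε = LinearMap.range (δ 0)
  exact : ∀ i, LinearMap.ker (δ i) = LinearMap.range (δ (i+1))

/-- The Castelnuovo–Mumford regularity of `I`, via the Eisenbud–Goto characterization
`reg(I) = min{d : I_{≥ d} has a d-linear resolution}`. -/
noncomputable def regEG {n : ℕ} (K : Type*) [Field K]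
    (I : Ideal (MvPolynomial (Fin n) K)) : ℕ :=
  sInf {d | Nonempty (LinearRes K (trunc K I d) d)}

/-!
A positive depth yields a nonzerodivisor `z ∈ 𝔪` on `S/I`. If `x^b ∉ I` but every push
`b[k ↦ g k]` of `b` to the boundary gave a monomial of `I`, then `X k ^ g k * x^b ∈ I` for all
`k`, so a power of `𝔪`, hence a power of `z`, multiplies `x^b` into `I`, and regularity forces
`x^b ∈ I`. Thus every point of the lower set `P = P^g_{S/I}` can be pushed to the boundary in
some direction. Let `k` be the first such direction for `x`; the points of `P` on the line through
`x` in direction `k` that still have `k` as first push direction form a segment `[c, d]`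
with `d k = g k`, because the set of push directions shrinks as one moves up. These segments
partition `P`, and each top `d` has `ρ(d) ≥ 1`, so `sdepth S/I ≥ 1`.
-/

open MvPolynomial Function

section Monomial

variable {n : ℕ} {K : Type*} [Field K]

lemma monX_add (u v : Fin n → ℕ) : monX n K (u + v) = monX n K u * monX n K v := by
  simp [monX, pow_add, Finset.prod_mul_distrib]

lemma monX_zero : monX n K 0 = 1 := by simp [monX]

lemma monX_single (k : Fin n) (e : ℕ) : monX n K (Pi.single k e) = X k ^ e := by
  rw [monX, Finset.prod_eq_single k (fun j _ hj => by simp [Pi.single_eq_of_ne hj]) (by simp)]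
  simp

lemma monX_mem_of_le {I : Ideal (MvPolynomial (Fin n) K)} {u v : Fin n → ℕ}
    (h : u ≤ v) (hu : monX n K u ∈ I) : monX n K v ∈ I := by
  obtain ⟨w, rfl⟩ : ∃ w, v = u + w := ⟨v - u, funext fun k => (Nat.add_sub_cancel' (h k)).symm⟩
  rw [monX_add]
  exact Ideal.mul_mem_right _ _ hu

lemma isLowerSet_charPoset (I : Ideal (MvPolynomial (Fin n) K)) (g : Fin n → ℕ) :
    IsLowerSet (charPoset K I g) :=
  fun _ _ hba ha => ⟨hba.trans ha.1, fun hb => ha.2 (monX_mem_of_le hba hb)⟩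

end Monomial

theorem Ideal.mem_of_le_radical_colon {R : Type*} [CommRing R] {I J : Ideal R} {z f : R}
    (hJ : J.FG) (hz : z ∈ J) (hreg : IsSMulRegular (R ⧸ I) z)
    (hJf : J ≤ (I.colon {f}).radical) : f ∈ I := by
  obtain ⟨N, hN⟩ := Ideal.exists_pow_le_of_le_radical_of_fg hJf hJ
  have hzf : z ^ N * f ∈ I := Submodule.mem_colon_singleton.1 (hN (Ideal.pow_mem_pow hz N))
  rw [← Ideal.Quotient.eq_zero_iff_mem]
  refine hreg.pow N (?_ : z ^ N • Ideal.Quotient.mk I f = z ^ N • 0)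
  rw [smul_zero, Algebra.smul_def, Ideal.Quotient.algebraMap_eq, ← map_mul,
    Ideal.Quotient.eq_zero_iff_mem]
  exact hzf

section Depth

variable {n : ℕ} {K : Type*} [Field K]

lemma mxId_fg : (mxId n K).FG :=
  Submodule.fg_span (Set.finite_range X)

lemma mxId_le_radical_colon {I : Ideal (MvPolynomial (Fin n) K)} {b g : Fin n → ℕ}
    (h : ∀ k, monX n K (update b k (g k)) ∈ I) :
    mxId n K ≤ (I.colon {monX n K b}).radical := by
  rw [mxId, Ideal.span_le]
  rintro _ ⟨k, rfl⟩
  refine ⟨g k, Submodule.mem_colon_singleton.2 ?_⟩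
  rw [smul_eq_mul, ← monX_single, ← monX_add]
  exact monX_mem_of_le (update_le_iff.2 ⟨by simp, fun j hj => by simp [hj]⟩) (h k)

lemma exists_update_monX_not_mem {I : Ideal (MvPolynomial (Fin n) K)}
    {z : MvPolynomial (Fin n) K} (hz : z ∈ mxId n K)
    (hreg : IsSMulRegular (MvPolynomial (Fin n) K ⧸ I) z)
    {b : Fin n → ℕ} (hb : monX n K b ∉ I) (g : Fin n → ℕ) :
    ∃ k, monX n K (update b k (g k)) ∉ I := by
  by_contra! h
  exact hb (Ideal.mem_of_le_radical_colon mxId_fg hz hreg (mxId_le_radical_colon h))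

lemma exists_isSMulRegular_of_mdepth_pos {M : Type*} [AddCommGroup M]
    [Module (MvPolynomial (Fin n) K) M] (h : 0 < mdepth n K M) :
    ∃ z ∈ mxId n K, IsSMulRegular M z ∧ Nontrivial M := by
  unfold mdepth at h
  obtain ⟨_, ⟨rs, rfl, hmx, hreg⟩, hlen⟩ :=
    exists_lt_of_lt_csSup (Set.nonempty_iff_ne_empty.2 fun he => by simp [he] at h) h
  obtain ⟨z, rs, rfl⟩ := List.exists_cons_of_length_pos hlen
  refine ⟨z, hmx z List.mem_cons_self,
    ((RingTheory.Sequence.isWeaklyRegular_cons_iff M z rs).1 hreg.toIsWeaklyRegular).1, ?_⟩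
  rw [← not_subsingleton_iff_nontrivial]
  exact fun _ => hreg.top_ne_smul (Subsingleton.elim _ _)

end Depth

section IntervalPartition

variable {n : ℕ}

lemma rho_le (g b : Fin n → ℕ) : rho g b ≤ n :=
  (Finset.card_filter_le _ _).trans_eq (Finset.card_fin n)

lemma one_le_rho_of_eq {g b : Fin n → ℕ} {k : Fin n} (hk : b k = g k) : 1 ≤ rho g b :=
  Finset.card_pos.2 ⟨k, Finset.mem_filter.2 ⟨Finset.mem_univ _, hk⟩⟩

theorem exists_intervalPartition_of_forall_mem_Icc {P : Set (Fin n → ℕ)} (hP : P.Finite)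
    (c d : (Fin n → ℕ) → Fin n → ℕ) (hmem : ∀ x ∈ P, x ∈ Set.Icc (c x) (d x))
    (hcd : ∀ x ∈ P, ∀ y ∈ Set.Icc (c x) (d x), y ∈ P ∧ c y = c x ∧ d y = d x) :
    ∃ Pt : IntervalPartition P, ∀ i, ∃ x ∈ P, Pt.d i = d x := by
  classical
  let F := hP.toFinset.image fun x => (c x, d x)
  let e : Fin F.card ≃ F := F.equivFin.symm
  have hF : ∀ i, ∃ x ∈ P, c x = (e i).1.1 ∧ d x = (e i).1.2 := fun i => by
    obtain ⟨x, hx, hxi⟩ := Finset.mem_image.1 (e i).2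
    exact ⟨x, hP.mem_toFinset.1 hx, by rw [← hxi]; exact ⟨rfl, rfl⟩⟩
  refine ⟨⟨F.card, fun i => (e i).1.1, fun i => (e i).1.2, fun i => ?_, ?_, fun i j hij => ?_⟩,
    fun i => ?_⟩
  · obtain ⟨x, hx, hc, hd⟩ := hF i
    rw [← hc, ← hd]
    exact (hmem x hx).1.trans (hmem x hx).2
  · ext y
    simp only [Set.mem_iUnion]
    constructor
    · intro hy
      have hyF : (c y, d y) ∈ F := Finset.mem_image_of_mem _ (hP.mem_toFinset.2 hy)
      exact ⟨e.symm ⟨_, hyF⟩, by simpa using hmem y hy⟩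
    · rintro ⟨i, hyi⟩
      obtain ⟨x, hx, hc, hd⟩ := hF i
      rw [← hc, ← hd] at hyi
      exact (hcd x hx y hyi).1
  · refine Set.disjoint_left.2 fun y hyi hyj => hij (e.injective (Subtype.ext ?_))
    obtain ⟨x, hx, hc, hd⟩ := hF i
    obtain ⟨x', hx', hc', hd'⟩ := hF j
    simp only [← hc, ← hd] at hyi
    simp only [← hc', ← hd'] at hyj
    obtain ⟨-, hcy, hdy⟩ := hcd x hx y hyi
    obtain ⟨-, hcy', hdy'⟩ := hcd x' hx' y hyj
    exact Prod.ext (by rw [← hc, ← hc', ← hcy, hcy']) (by rw [← hd, ← hd', ← hdy, hdy'])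
  · obtain ⟨x, hx, -, hd⟩ := hF i
    exact ⟨x, hx, hd.symm⟩

end IntervalPartition

theorem eq_update_of_mem_Icc_update {ι : Type*} [DecidableEq ι] {α : Type*} [PartialOrder α]
    {x y : ι → α} {k : ι} {s t : α} (hs : update x k s ≤ y) (ht : y ≤ update x k t) :
    y = update x k (y k) := by
  ext j
  rcases eq_or_ne j k with rfl | hj
  · simp
  · rw [update_of_ne hj]
    exact le_antisymm ((le_update_iff.1 ht).2 j hj) ((update_le_iff.1 hs).2 j hj)

noncomputable section Segments

variable {n : ℕ} (P : Set (Fin n → ℕ)) (g : Fin n → ℕ)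

open Classical in
def pushDirs (x : Fin n → ℕ) : Finset (Fin n) := {k | update x k (g k) ∈ P}

open Classical in
def firstPushDir [Nonempty (Fin n)] (x : Fin n → ℕ) : Fin n :=
  if h : (pushDirs P g x).Nonempty then (pushDirs P g x).min' h else Classical.arbitrary _

def pushStart [Nonempty (Fin n)] (x : Fin n → ℕ) : ℕ :=
  sInf {t | ∀ j ∈ pushDirs P g (update x (firstPushDir P g x) t), firstPushDir P g x ≤ j}

def segBot [Nonempty (Fin n)] (x : Fin n → ℕ) : Fin n → ℕ :=
  update x (firstPushDir P g x) (pushStart P g x)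

def segTop [Nonempty (Fin n)] (x : Fin n → ℕ) : Fin n → ℕ :=
  update x (firstPushDir P g x) (g (firstPushDir P g x))

variable {P g}

@[simp]
lemma mem_pushDirs {x : Fin n → ℕ} {k : Fin n} :
    k ∈ pushDirs P g x ↔ update x k (g k) ∈ P := by
  simp [pushDirs]

lemma mem_pushDirs_update_self {x : Fin n → ℕ} {k : Fin n} {t : ℕ} :
    k ∈ pushDirs P g (update x k t) ↔ k ∈ pushDirs P g x := by
  simp

lemma pushDirs_antitone (hP : IsLowerSet P) : Antitone (pushDirs P g) :=
  fun _ _ hxy _ hk => mem_pushDirs.2 <|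
    hP (update_le_update_iff.2 ⟨le_rfl, fun j _ => hxy j⟩) (mem_pushDirs.1 hk)

variable [Nonempty (Fin n)] {x : Fin n → ℕ}

lemma firstPushDir_mem (h : (pushDirs P g x).Nonempty) :
    firstPushDir P g x ∈ pushDirs P g x := by
  rw [firstPushDir, dif_pos h]
  exact Finset.min'_mem _ _

lemma firstPushDir_le (h : (pushDirs P g x).Nonempty) {j : Fin n} (hj : j ∈ pushDirs P g x) :
    firstPushDir P g x ≤ j := by
  rw [firstPushDir, dif_pos h]
  exact Finset.min'_le _ _ hj

lemma firstPushDir_eq {k : Fin n} (hk : k ∈ pushDirs P g x)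
    (hmin : ∀ j ∈ pushDirs P g x, k ≤ j) : firstPushDir P g x = k :=
  le_antisymm (firstPushDir_le ⟨k, hk⟩ hk) (hmin _ (firstPushDir_mem ⟨k, hk⟩))

lemma pushStart_le (h : (pushDirs P g x).Nonempty) :
    pushStart P g x ≤ x (firstPushDir P g x) :=
  Nat.sInf_le fun j hj => firstPushDir_le h (by rwa [update_eq_self] at hj)

lemma firstPushDir_le_of_mem_pushDirs_pushStart (h : (pushDirs P g x).Nonempty) {j : Fin n}
    (hj : j ∈ pushDirs P g (update x (firstPushDir P g x) (pushStart P g x))) :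
    firstPushDir P g x ≤ j :=
  Nat.sInf_mem (s := {t | ∀ j ∈ pushDirs P g (update x (firstPushDir P g x) t),
    firstPushDir P g x ≤ j})
    ⟨_, fun j hj => firstPushDir_le h (by rwa [update_eq_self] at hj)⟩ j hj

lemma firstPushDir_update (hP : IsLowerSet P) (h : (pushDirs P g x).Nonempty) {t : ℕ}
    (ht : pushStart P g x ≤ t) :
    firstPushDir P g (update x (firstPushDir P g x) t) = firstPushDir P g x :=
  firstPushDir_eq (mem_pushDirs_update_self.2 (firstPushDir_mem h)) fun _ hj =>
    firstPushDir_le_of_mem_pushDirs_pushStart h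
      (pushDirs_antitone hP (update_le_update_iff'.2 ht) hj)

lemma segTop_mem (h : (pushDirs P g x).Nonempty) : segTop P g x ∈ P :=
  mem_pushDirs.1 (firstPushDir_mem h)

lemma mem_Icc_segBot_segTop (hxg : x ≤ g) (h : (pushDirs P g x).Nonempty) :
    x ∈ Set.Icc (segBot P g x) (segTop P g x) :=
  ⟨update_le_iff.2 ⟨pushStart_le h, fun _ _ => le_rfl⟩,
    le_update_iff.2 ⟨hxg _, fun _ _ => le_rfl⟩⟩

lemma segBot_segTop_update (hP : IsLowerSet P) (h : (pushDirs P g x).Nonempty) {t : ℕ}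
    (ht : pushStart P g x ≤ t) :
    segBot P g (update x (firstPushDir P g x) t) = segBot P g x ∧
      segTop P g (update x (firstPushDir P g x) t) = segTop P g x := by
  simp [segBot, segTop, pushStart, firstPushDir_update hP h ht]

lemma segBot_segTop_of_mem_Icc (hP : IsLowerSet P) (h : (pushDirs P g x).Nonempty)
    {y : Fin n → ℕ} (hy : y ∈ Set.Icc (segBot P g x) (segTop P g x)) :
    y ∈ P ∧ segBot P g y = segBot P g x ∧ segTop P g y = segTop P g x := by
  obtain ⟨hby, hyt⟩ := hy
  have hyx : y = update x (firstPushDir P g x) (y (firstPushDir P g x)) :=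
    eq_update_of_mem_Icc_update hby hyt
  refine ⟨hP hyt (segTop_mem h), ?_⟩
  rw [hyx]
  exact segBot_segTop_update hP h (by simpa [segBot] using hby (firstPushDir P g x))

end Segments

theorem exists_intervalPartition_one_le_rho {n : ℕ} {P : Set (Fin n → ℕ)} {g : Fin n → ℕ}
    (hP : IsLowerSet P) (hPg : P ⊆ Set.Iic g) (hpush : ∀ x ∈ P, ∃ k, update x k (g k) ∈ P) :
    ∃ Pt : IntervalPartition P, ∀ i, 1 ≤ rho g (Pt.d i) := by
  rcases P.eq_empty_or_nonempty with rfl | ⟨x₀, hx₀⟩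
  · obtain ⟨Pt, hPt⟩ :=
      exists_intervalPartition_of_forall_mem_Icc Set.finite_empty id id (by simp) (by simp)
    exact ⟨Pt, fun i => by simpa using hPt i⟩
  have : Nonempty (Fin n) := ⟨(hpush x₀ hx₀).choose⟩
  have hdirs : ∀ x ∈ P, (pushDirs P g x).Nonempty := fun x hx =>
    let ⟨k, hk⟩ := hpush x hx; ⟨k, mem_pushDirs.2 hk⟩
  obtain ⟨Pt, hPt⟩ := exists_intervalPartition_of_forall_mem_Icc ((Set.finite_Iic g).subset hPg)
    (segBot P g) (segTop P g) (fun x hx => mem_Icc_segBot_segTop (hPg hx) (hdirs x hx))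
    (fun x hx _ hy => segBot_segTop_of_mem_Icc hP (hdirs x hx) hy)
  refine ⟨Pt, fun i => ?_⟩
  obtain ⟨x, -, hx⟩ := hPt i
  rw [hx]
  exact one_le_rho_of_eq (update_self _ _ _)

-- Nonemptiness is needed: for the empty poset every `t` qualifies and `sSup` falls back to `0`.
lemma le_sdepthQ {n : ℕ} {K : Type*} [Field K] {I : Ideal (MvPolynomial (Fin n) K)}
    {g : Fin n → ℕ} (hne : (charPoset K I g).Nonempty) {t : ℕ}
    (Pt : IntervalPartition (charPoset K I g)) (ht : ∀ i, t ≤ rho g (Pt.d i)) :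
    t ≤ sdepthQ K I g := by
  refine le_csSup ⟨n, fun s ⟨Pt', hs⟩ => ?_⟩ ⟨Pt, ht⟩
  obtain ⟨x, hx⟩ := hne
  rw [Pt'.cover, Set.mem_iUnion] at hx
  obtain ⟨i, -⟩ := hx
  exact (hs i).trans (rho_le g _)

theorem stanley_depth_le_one_general (n : ℕ) (K : Type*) [Field K]
    (I : Ideal (MvPolynomial (Fin n) K))
    (g : Fin n → ℕ)
    (hdepth : mdepth n K (MvPolynomial (Fin n) K ⧸ I) ≤ 1) :
    mdepth n K (MvPolynomial (Fin n) K ⧸ I) ≤ sdepthQ K I g := by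
  rcases Nat.eq_zero_or_pos (mdepth n K (MvPolynomial (Fin n) K ⧸ I)) with h0 | hpos
  · exact h0 ▸ Nat.zero_le _
  obtain ⟨z, hz, hreg, hnt⟩ := exists_isSMulRegular_of_mdepth_pos hpos
  have hzero : (0 : Fin n → ℕ) ∈ charPoset K I g := by
    refine ⟨fun _ => Nat.zero_le _, ?_⟩
    rw [monX_zero, ← Ideal.eq_top_iff_one]
    exact Ideal.Quotient.nontrivial_iff.1 hnt
  obtain ⟨Pt, hPt⟩ := exists_intervalPartition_one_le_rho (isLowerSet_charPoset I g)
    (fun _ hb => hb.1) fun b hb => by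
      obtain ⟨k, hk⟩ := exists_update_monX_not_mem hz hreg hb.2 g
      exact ⟨k, update_le_iff.2 ⟨le_rfl, fun j _ => hb.1 j⟩, hk⟩
  exact hdepth.trans (le_sdepthQ ⟨0, hzero⟩ Pt hPt)

/-- every monomial factor algebra `S/I` with `depth S/I ≤ 1` satisfies
Stanley's conjecture `sdepth S/I ≥ depth S/I`. -/
theorem stanley_depth_le_one (n m : ℕ) (K : Type*) [Field K]
    (a : Fin m → (Fin n → ℕ)) (I : Ideal (MvPolynomial (Fin n) K))
    (hI : I = Ideal.span (Set.range fun i => monX n K (a i)))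
    (hmin : ∀ i j, i ≠ j → ¬ a i ≤ a j)
    (g : Fin n → ℕ) (hg : ∀ i, a i ≤ g)
    (hdepth : mdepth n K (MvPolynomial (Fin n) K ⧸ I) ≤ 1) :
    mdepth n K (MvPolynomial (Fin n) K ⧸ I) ≤ sdepthQ K I g :=
  stanley_depth_le_one_general n K I g hdepth
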